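/- (Bochner-type formula for exponentially harmonic functions, flat case.) Let u : EuclideanSpace ℝ (Fin n) → ℝ be C³ and satisfy Δu(x) + Hess u(x)(∇u(x), ∇u(x)) = 0 for all x (exponential harmonicity). Set e(x) := ‖∇u(x)‖². Then for every x: Δe(x) + Hess e(x)(∇u(x), ∇u(x)) = 2‖Hess u(x)‖²_HS − (1/2)‖∇e(x)‖², where ‖Hess u(x)‖²_HS := ∑ᵢⱼ (Hess u(x)(eᵢ, eⱼ))². -/

import Mathlib

open scoped RealInnerProductSpace
open Real MeasureTheory

noncomputable def Hess {n : ℕ} (f : EuclideanSpace ℝ (Fin n) → ℝ)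
    (x v w : EuclideanSpace ℝ (Fin n)) : ℝ :=
  iteratedFDeriv ℝ 2 f x ![v, w]

noncomputable def lap {n : ℕ} (f : EuclideanSpace ℝ (Fin n) → ℝ)
    (x : EuclideanSpace ℝ (Fin n)) : ℝ :=
  ∑ i, Hess f x (EuclideanSpace.basisFun (Fin n) ℝ i) (EuclideanSpace.basisFun (Fin n) ℝ i)

noncomputable def divg {n : ℕ} (X : EuclideanSpace ℝ (Fin n) → EuclideanSpace ℝ (Fin n))
    (x : EuclideanSpace ℝ (Fin n)) : ℝ :=
  ∑ i, ⟪fderiv ℝ X x (EuclideanSpace.basisFun (Fin n) ℝ i), EuclideanSpace.basisFun (Fin n) ℝ i⟫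

/-!
Write `g = ∇u` and `A = D(∇u)`, a self-adjoint operator with `⟪A v, w⟫ = D²u(v, w)`.
Differentiating `e = ‖g‖²` twice gives `∇e = 2 A g` and
`D²e(v, w) = 2 ⟪A v, A w⟫ + 2 D³u(v, w, g)`, so
`Δ̂e = 2 ‖D²u‖²_HS + 2 ‖A g‖² + 2 (∑ᵢ D³u(g, bᵢ, bᵢ) + D³u(g, g, g))`
by the symmetry of `D³u`. Differentiating the equation `Δ̂u = 0` in the direction `g` shows that
the bracket equals `-2 ‖A g‖²`, and `4 ‖A g‖² = ‖∇e‖²`.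
-/

open InnerProductSpace

section Symmetry

variable {E G : Type*} [NormedAddCommGroup E] [NormedSpace ℝ E] [NormedAddCommGroup G]
  [NormedSpace ℝ G] {u : E → G}

theorem fderiv_clm_apply_const_apply {H : Type*} [NormedAddCommGroup H] [NormedSpace ℝ H]
    {c : E → G →L[ℝ] H} {x : E} (hc : DifferentiableAt ℝ c x) (v : G) (a : E) :
    fderiv ℝ (fun y => c y v) x a = fderiv ℝ c x a v := by
  simp [fderiv_clm_apply hc (differentiableAt_const v)]

theorem ContDiff.differentiable_fderiv (hu : ContDiff ℝ 2 u) : Differentiable ℝ (fderiv ℝ u) :=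
  (hu.fderiv_right (m := 1) (by norm_num)).differentiable one_ne_zero

theorem fderiv_fderiv_apply_comm (hu : ContDiff ℝ 2 u) (x v w : E) :
    fderiv ℝ (fderiv ℝ u) x v w = fderiv ℝ (fderiv ℝ u) x w v :=
  (hu.contDiffAt.isSymmSndFDerivAt (by simp)).eq v w

theorem fderiv_fderiv_fderiv_apply_rotate (hu : ContDiff ℝ 3 u) (x a b c : E) :
    fderiv ℝ (fderiv ℝ (fderiv ℝ u)) x a b c = fderiv ℝ (fderiv ℝ (fderiv ℝ u)) x c a b := by
  have hu' : ContDiff ℝ 2 (fderiv ℝ u) := hu.fderiv_right (by norm_num)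
  have apply_eq : ∀ a b c, fderiv ℝ (fderiv ℝ (fderiv ℝ u)) x a b c
      = fderiv ℝ (fun y => fderiv ℝ (fderiv ℝ u) y b c) x a := fun a b c => by
    have hD2 := hu'.differentiable_fderiv x
    rw [fderiv_clm_apply_const_apply (c := fun y => fderiv ℝ (fderiv ℝ u) y b)
      (hD2.clm_apply (differentiableAt_const b)), fderiv_clm_apply_const_apply hD2]
  have swap_right : ∀ a b c, fderiv ℝ (fderiv ℝ (fderiv ℝ u)) x a b c
      = fderiv ℝ (fderiv ℝ (fderiv ℝ u)) x a c b := fun a b c => by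
    simp only [apply_eq, fderiv_fderiv_apply_comm (hu.of_le (by norm_num)) _ b c]
  rw [swap_right, fderiv_fderiv_apply_comm hu' x a c]

end Symmetry

section Gradient

variable {F : Type*} [NormedAddCommGroup F] [InnerProductSpace ℝ F] [CompleteSpace F]
  {u : F → ℝ} {x : F}

theorem hasFDerivAt_gradient {D : F →L[ℝ] StrongDual ℝ F} (h : HasFDerivAt (fderiv ℝ u) D x) :
    HasFDerivAt (gradient u)
      ((toDual ℝ F).symm.toContinuousLinearEquiv.toContinuousLinearMap ∘L D) x :=
  (toDual ℝ F).symm.toContinuousLinearEquiv.hasFDerivAt.comp x h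

theorem DifferentiableAt.gradient (h : DifferentiableAt ℝ (fderiv ℝ u) x) :
    DifferentiableAt ℝ (gradient u) x :=
  (hasFDerivAt_gradient h.hasFDerivAt).differentiableAt

theorem ContDiff.gradient {k : WithTop ℕ∞} (hu : ContDiff ℝ (k + 1) u) :
    ContDiff ℝ k (gradient u) :=
  (toDual ℝ F).symm.toContinuousLinearEquiv.contDiff.comp (hu.fderiv_right le_rfl)

theorem inner_fderiv_gradient (h : DifferentiableAt ℝ (fderiv ℝ u) x) (v w : F) :
    ⟪fderiv ℝ (gradient u) x v, w⟫ = fderiv ℝ (fderiv ℝ u) x v w := by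
  rw [(hasFDerivAt_gradient h.hasFDerivAt).fderiv]
  exact toDual_symm_apply

theorem sum_norm_sq_fderiv_gradient {ι : Type*} [Fintype ι] (b : OrthonormalBasis ι ℝ F)
    (h : DifferentiableAt ℝ (fderiv ℝ u) x) :
    ∑ i, ‖fderiv ℝ (gradient u) x (b i)‖ ^ 2
      = ∑ i, ∑ j, (fderiv ℝ (fderiv ℝ u) x (b i) (b j)) ^ 2 := by
  simp only [← b.sum_sq_inner_left, inner_fderiv_gradient h]

theorem fderiv_norm_sq_gradient_apply (h : DifferentiableAt ℝ (fderiv ℝ u) x) (v : F) :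
    fderiv ℝ (fun y => ‖gradient u y‖ ^ 2) x v
      = 2 * fderiv ℝ (fderiv ℝ u) x v (gradient u x) := by
  rw [h.gradient.hasFDerivAt.norm_sq.fderiv, smul_apply, ContinuousLinearMap.comp_apply, innerSL_apply_apply, real_inner_comm,
    inner_fderiv_gradient h, nsmul_eq_mul, Nat.cast_ofNat]

theorem gradient_norm_sq_gradient (hu : ContDiff ℝ 2 u) (x : F) :
    gradient (fun y => ‖gradient u y‖ ^ 2) x
      = (2 : ℝ) • fderiv ℝ (gradient u) x (gradient u x) := by
  have hD1 := hu.differentiable_fderiv x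
  refine ext_inner_right ℝ fun v => ?_
  rw [inner_gradient_left, fderiv_norm_sq_gradient_apply hD1, real_inner_smul_left,
    inner_fderiv_gradient hD1, fderiv_fderiv_apply_comm hu]

theorem fderiv_fderiv_norm_sq_gradient_apply (hu : ContDiff ℝ 3 u) (x v w : F) :
    fderiv ℝ (fderiv ℝ (fun y => ‖gradient u y‖ ^ 2)) x v w
      = 2 * (fderiv ℝ (fderiv ℝ (fderiv ℝ u)) x v w (gradient u x)
        + ⟪fderiv ℝ (gradient u) x v, fderiv ℝ (gradient u) x w⟫) := by
  have hD1 := (hu.of_le (by norm_num)).differentiable_fderiv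
  have hD2 := (hu.fderiv_right (m := 2) (by norm_num)).differentiable_fderiv
  have hDe : Differentiable ℝ (fderiv ℝ (fun y => ‖gradient u y‖ ^ 2)) :=
    ((contDiff_norm_sq ℝ).comp (hu.gradient (k := 2))).differentiable_fderiv
  calc fderiv ℝ (fderiv ℝ (fun y => ‖gradient u y‖ ^ 2)) x v w
      = fderiv ℝ (fun y => 2 * fderiv ℝ (fderiv ℝ u) y w (gradient u y)) x v := by
        rw [← fderiv_clm_apply_const_apply (hDe x)]
        simp only [fderiv_norm_sq_gradient_apply (hD1 _)]
    _ = 2 * (fderiv ℝ (fderiv ℝ (fderiv ℝ u)) x v w (gradient u x)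
        + fderiv ℝ (fderiv ℝ u) x w (fderiv ℝ (gradient u) x v)) := by
        have h := (((hD2 x).hasFDerivAt.clm_apply (hasFDerivAt_const w x)).clm_apply
          (hD1 x).gradient.hasFDerivAt).const_mul 2
        rw [h.fderiv]
        simp only [ContinuousLinearMap.comp_zero, zero_add, smul_add, add_apply, smul_apply,
          ContinuousLinearMap.comp_apply, smul_eq_mul, ContinuousLinearMap.flip_apply]
        ring
    _ = _ := by
        rw [← inner_fderiv_gradient (hD1 x), real_inner_comm]

end Gradient

section HatLaplacian

variable {F : Type*} [NormedAddCommGroup F] [InnerProductSpace ℝ F] [CompleteSpace F]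
  {ι : Type*} [Fintype ι] (b : OrthonormalBasis ι ℝ F) {u : F → ℝ}

/-- The operator `Δ̂^V` of the paper, with the Laplacian written as a trace in the orthonormal
basis `b`. -/
noncomputable def hatLaplacian (V : F → F) (f : F → ℝ) (x : F) : ℝ :=
  ∑ i, fderiv ℝ (fderiv ℝ f) x (b i) (b i) + fderiv ℝ (fderiv ℝ f) x (V x) (V x)

theorem fderiv_hatLaplacian_gradient_self_apply (hu : ContDiff ℝ 3 u) (x v : F) :
    fderiv ℝ (hatLaplacian b (gradient u) u) x v
      = ∑ i, fderiv ℝ (fderiv ℝ (fderiv ℝ u)) x v (b i) (b i)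
        + fderiv ℝ (fderiv ℝ (fderiv ℝ u)) x v (gradient u x) (gradient u x)
        + 2 * ⟪fderiv ℝ (gradient u) x v, fderiv ℝ (gradient u) x (gradient u x)⟫ := by
  have hD1 := (hu.of_le (by norm_num)).differentiable_fderiv
  have hD2 := (hu.fderiv_right (m := 2) (by norm_num)).differentiable_fderiv
  have hG := (hD1 x).gradient.hasFDerivAt
  have h := (HasFDerivAt.fun_sum (u := Finset.univ) fun i _ =>
      ((hD2 x).hasFDerivAt.clm_apply (hasFDerivAt_const (b i) x)).clm_apply
        (hasFDerivAt_const (b i) x)).fun_add (((hD2 x).hasFDerivAt.clm_apply hG).clm_apply hG)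
  unfold hatLaplacian
  rw [h.fderiv]
  simp only [ContinuousLinearMap.comp_zero, zero_add, ContinuousLinearMap.flip_add, add_apply,
    sum_apply, ContinuousLinearMap.flip_apply, ContinuousLinearMap.comp_apply]
  rw [fderiv_fderiv_apply_comm (hu.of_le (by norm_num)) x _ (gradient u x),
    ← inner_fderiv_gradient (hD1 x), real_inner_comm]
  ring

theorem hatLaplacian_norm_sq_gradient (hu : ContDiff ℝ 3 u)
    (hharm : ∀ y, hatLaplacian b (gradient u) u y = 0) (x : F) :
    hatLaplacian b (gradient u) (fun y => ‖gradient u y‖ ^ 2) x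
      = 2 * ∑ i, ∑ j, (fderiv ℝ (fderiv ℝ u) x (b i) (b j)) ^ 2
        - 1 / 2 * ‖gradient (fun y => ‖gradient u y‖ ^ 2) x‖ ^ 2 := by
  have hconst : fderiv ℝ (hatLaplacian b (gradient u) u) x = 0 := by
    simp [show hatLaplacian b (gradient u) u = fun _ => 0 from funext hharm]
  have hdiff := fderiv_hatLaplacian_gradient_self_apply b hu x (gradient u x)
  rw [hconst, zero_apply, real_inner_self_eq_norm_sq] at hdiff
  simp only [hatLaplacian, fderiv_fderiv_norm_sq_gradient_apply hu,
    fderiv_fderiv_fderiv_apply_rotate hu x _ _ (gradient u x),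
    ← sum_norm_sq_fderiv_gradient b ((hu.of_le (by norm_num)).differentiable_fderiv x),
    gradient_norm_sq_gradient (hu.of_le (by norm_num)), norm_smul, Real.norm_ofNat,
    real_inner_self_eq_norm_sq, mul_add, Finset.sum_add_distrib, ← Finset.mul_sum]
  linear_combination (-2) * hdiff

end HatLaplacian

theorem hess_eq_fderiv_fderiv {n : ℕ} (f : EuclideanSpace ℝ (Fin n) → ℝ)
    (x v w : EuclideanSpace ℝ (Fin n)) : Hess f x v w = fderiv ℝ (fderiv ℝ f) x v w := by
  simp [Hess, iteratedFDeriv_two_apply]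

theorem lap_add_hess_eq_hatLaplacian {n : ℕ}
    (V : EuclideanSpace ℝ (Fin n) → EuclideanSpace ℝ (Fin n))
    (f : EuclideanSpace ℝ (Fin n) → ℝ) (x : EuclideanSpace ℝ (Fin n)) :
    lap f x + Hess f x (V x) (V x) = hatLaplacian (EuclideanSpace.basisFun (Fin n) ℝ) V f x := by
  simp only [lap, hatLaplacian, hess_eq_fderiv_fderiv]

/-- Bochner-type formula for exponentially harmonic functions (flat case). -/
theorem stmt_4 {n : ℕ} (u : EuclideanSpace ℝ (Fin n) → ℝ) (hu : ContDiff ℝ 3 u)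
    (hharm : ∀ x, lap u x + Hess u x (gradient u x) (gradient u x) = 0)
    (e : EuclideanSpace ℝ (Fin n) → ℝ) (he : e = fun x => ‖gradient u x‖ ^ 2) :
    ∀ x, lap e x + Hess e x (gradient u x) (gradient u x)
      = 2 * (∑ i, ∑ j, (Hess u x (EuclideanSpace.basisFun (Fin n) ℝ i)
            (EuclideanSpace.basisFun (Fin n) ℝ j)) ^ 2)
        - (1 / 2) * ‖gradient e x‖ ^ 2 := by
  intro x
  subst he
  simp only [lap_add_hess_eq_hatLaplacian] at hharm ⊢
  simp only [hatLaplacian_norm_sq_gradient _ hu hharm, hess_eq_fderiv_fderiv]
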